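/- arXiv:2007.00173 — 2 statements merged into one kernel-verified Lean document; each statement's English description precedes it below -/
import Mathlib

section
/- For every ε ∈ ℂ with |ε| = 1 and ε ≠ 1 and every integer r ≥ 1, the partial sums ∑_{0 < n₁ < ⋯ < n_r ≤ M} ε^{n_r} / (n₁ n₂ ⋯ n_r) converge as M → ∞ to ((−1)^r / r!) · (log(1−ε))^r, where log denotes the principal branch of the complex logarithm. Equivalently, the unit cyclotomic multiple zeta value ζ(1,…,1; 1,…,1,ε) of weight and depth r equals ((−1)^r / r!) (log(1−ε))^r. -/
open Filter Topology

/-- Partial sum `∑_{0 < n₁ < ⋯ < n_r ≤ M} ε^{n_r} / (n₁ n₂ ⋯ n_r)` of the series defining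
the unit cyclotomic multiple zeta value `ζ(1,…,1; 1,…,1,ε)` of weight and depth `r`. -/
noncomputable def unitZetaPartial (ε : ℂ) (r M : ℕ) : ℂ :=
  ∑ n ∈ (Fintype.piFinset fun _ : Fin r => Finset.Icc 1 M).filter
      (fun n => ∀ i j : Fin r, i < j → n i < n j),
    ∏ i : Fin r, (if i.1 = r - 1 then ε else 1) ^ n i / (n i : ℂ)

/-!
Peeling off the largest index `n_r = m + 1` writes the partial sum as
`∑_{m < M} ε^{m+1} e_{r-1}(1, 1/2, …, 1/m) / (m + 1)`, and these coefficients are exactly the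
Taylor coefficients `a⁽ʳ⁾` of `(-log (1 - x))^r / r!`: both satisfy
`(n + 1) a⁽ʳ⁾_{n+1} = ∑_{k ≤ n} a⁽ʳ⁻¹⁾_k`, the coefficient form of
`d/dx (L^r / r!) = L^{r-1} / (r-1)! · 1 / (1 - x)`. Since `e_{r-1}(1, …, 1/m) ≤ H_m^{r-1}`, the
coefficients are `O(log^{r-1} n / n)` with differences `O(log^{r-1} n / n²)`, so summation by parts
against the bounded partial sums of `εⁿ` makes the series converge at `ε`. Abel's limit theorem
then identifies the sum with the boundary value `(-log (1 - ε))^r / r!`, which is continuous at `ε`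
because `1 - ε` lies in the slit plane.
-/

open Finset PowerSeries

theorem cauchySeq_series_smul_of_tendsto_zero_of_summable_abs_sub {E : Type*}
    [NormedAddCommGroup E] [NormedSpace ℝ E] {b : ℝ} {f : ℕ → ℝ} {z : ℕ → E}
    (hf0 : Tendsto f atTop (𝓝 0)) (hfv : Summable fun n ↦ |f (n + 1) - f n|)
    (hzb : ∀ n, ‖∑ i ∈ range n, z i‖ ≤ b) :
    CauchySeq fun n ↦ ∑ i ∈ range n, f i • z i := by
  rw [← cauchySeq_shift 1]
  simp_rw [Finset.sum_range_by_parts _ _ (Nat.succ _), sub_eq_add_neg, Nat.succ_sub_succ_eq_sub,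
    tsub_zero]
  apply (NormedField.tendsto_zero_smul_of_tendsto_zero_of_bounded hf0
    ⟨b, eventually_map.mpr <| Eventually.of_forall fun n ↦ hzb <| n + 1⟩).cauchySeq.add
  refine CauchySeq.neg (cauchySeq_range_of_norm_bounded (g := fun n ↦ b * |f (n + 1) - f n|)
    (hfv.mul_left b).hasSum.tendsto_sum_nat.cauchySeq fun n ↦ ?_)
  rw [norm_smul, Real.norm_eq_abs, ← sub_eq_add_neg, mul_comm]
  exact mul_le_mul_of_nonneg_right (hzb _) (abs_nonneg _)

theorem norm_geom_sum_le {𝕜 : Type*} [NormedDivisionRing 𝕜] {x : 𝕜} (hx : ‖x‖ ≤ 1) (hx1 : x ≠ 1)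
    (n : ℕ) : ‖∑ i ∈ range n, x ^ i‖ ≤ 2 / ‖x - 1‖ := by
  rw [geom_sum_eq hx1, norm_div]
  gcongr
  calc ‖x ^ n - 1‖ ≤ ‖x‖ ^ n + ‖(1 : 𝕜)‖ := by grw [norm_sub_le, norm_pow]
    _ ≤ 2 := by grw [hx, norm_one]; norm_num

theorem Complex.one_sub_mem_slitPlane {z : ℂ} (hz : ‖z‖ ≤ 1) (hz1 : z ≠ 1) :
    1 - z ∈ slitPlane := by
  refine mem_slitPlane_iff.2 (Or.inl ?_)
  by_contra! h
  have hre : 1 ≤ z.re := by simpa using h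
  have hsq : z.re * z.re + z.im * z.im ≤ 1 := by
    rw [← normSq_apply, ← Complex.sq_norm]
    nlinarith [norm_nonneg z]
  have him : z.im = 0 := by nlinarith [sq_nonneg z.im]
  exact hz1 (Complex.ext (by rw [one_re]; nlinarith) (by rw [him, one_im]))

theorem eq_of_tendsto_sum_of_hasSum_of_continuousAt {a : ℕ → ℂ} {G : ℂ → ℂ} {ε l : ℂ}
    (hε : ‖ε‖ ≤ 1) (hG : ∀ z : ℂ, ‖z‖ < 1 → HasSum (fun n ↦ a n * z ^ n) (G z))
    (hGε : ContinuousAt G ε) (h : Tendsto (fun N ↦ ∑ i ∈ range N, a i * ε ^ i) atTop (𝓝 l)) :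
    l = G ε := by
  have habel := Complex.tendsto_tsum_powerSeries_nhdsWithin_lt h
  have hsum : ∀ᶠ z in (𝓝[<] (1 : ℝ)).map Complex.ofReal,
      ∑' n, a n * ε ^ n * z ^ n = G (z * ε) := by
    rw [eventually_map]
    filter_upwards [Ioo_mem_nhdsLT (show (-1 : ℝ) < 1 by norm_num)] with t ht
    have htε : ‖(t : ℂ) * ε‖ < 1 := by
      rw [norm_mul, Complex.norm_real, Real.norm_eq_abs]
      exact (mul_le_of_le_one_right (abs_nonneg t) hε).trans_lt (abs_lt.2 ht)
    simp_rw [mul_assoc, ← mul_pow, mul_comm ε]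
    exact (hG _ htε).tsum_eq
  have hlim : Tendsto (fun z : ℂ ↦ z * ε) ((𝓝[<] (1 : ℝ)).map Complex.ofReal) (𝓝 ε) := by
    have : Continuous fun t : ℝ ↦ (t : ℂ) * ε := Complex.continuous_ofReal.mul continuous_const
    rw [tendsto_map'_iff, Function.comp_def]
    simpa using (this.tendsto 1).mono_left nhdsWithin_le_nhds
  exact tendsto_nhds_unique habel ((hGε.tendsto.comp hlim).congr' (hsum.mono fun z hz ↦ hz.symm))

theorem harmonic_mono : Monotone harmonic :=
  monotone_nat_of_le_succ fun n ↦ by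
    rw [harmonic_succ]; exact le_add_of_nonneg_right (by positivity)

theorem harmonic_nonneg (n : ℕ) : 0 ≤ harmonic n :=
  harmonic_zero ▸ harmonic_mono n.zero_le

theorem one_add_harmonic_pow_le (r : ℕ) :
    ∃ C, ∀ n : ℕ, (1 + (harmonic n : ℝ)) ^ r ≤ C * ((n : ℝ) + 1) ^ (1 / 2 : ℝ) := by
  set δ : ℝ := 1 / (2 * r + 2)
  have hδ : 0 < δ := by positivity
  have hδr : δ * r ≤ 1 / 2 := by
    rw [div_mul_eq_mul_div, one_mul, div_le_div_iff₀ (by positivity) two_pos]; linarith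
  refine ⟨(2 + 1 / δ) ^ r, fun n ↦ ?_⟩
  set x : ℝ := n + 1
  have hx : 1 ≤ x := by simp [x]
  have hxδ : 1 ≤ x ^ δ := Real.one_le_rpow hx hδ.le
  have hlog : Real.log n ≤ x ^ δ / δ :=
    (Real.log_le_rpow_div n.cast_nonneg hδ).trans (by gcongr; simp [x])
  have hH : 1 + (harmonic n : ℝ) ≤ (2 + 1 / δ) * x ^ δ := by
    have := harmonic_le_one_add_log n
    rw [add_mul, one_div_mul_eq_div]
    linarith
  have hH0 : 0 ≤ 1 + (harmonic n : ℝ) := by have := harmonic_nonneg n; positivity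
  calc (1 + (harmonic n : ℝ)) ^ r ≤ ((2 + 1 / δ) * x ^ δ) ^ r := by gcongr
    _ = (2 + 1 / δ) ^ r * x ^ (δ * r) := by rw [mul_pow, Real.rpow_mul_natCast (by positivity)]
    _ ≤ (2 + 1 / δ) ^ r * x ^ (1 / 2 : ℝ) := by gcongr

/-- `harmonicESymm r N` is the elementary symmetric function `e_r(1, 1/2, …, 1/N)`. -/
noncomputable def harmonicESymm : ℕ → ℕ → ℝ
  | 0, _ => 1
  | r + 1, N => ∑ m ∈ range N, harmonicESymm r m / (m + 1)

theorem harmonicESymm_nonneg (r N : ℕ) : 0 ≤ harmonicESymm r N := by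
  cases r with
  | zero => exact zero_le_one
  | succ r => exact sum_nonneg fun m _ ↦ div_nonneg (harmonicESymm_nonneg r m) m.cast_add_one_pos.le

theorem harmonicESymm_succ_succ (r N : ℕ) :
    harmonicESymm (r + 1) (N + 1) = harmonicESymm (r + 1) N + harmonicESymm r N / (N + 1) :=
  sum_range_succ _ _

theorem harmonicESymm_le_harmonic_pow (r N : ℕ) : harmonicESymm r N ≤ (harmonic N : ℝ) ^ r := by
  induction r generalizing N with
  | zero => simp [harmonicESymm]
  | succ r ih =>
    have hH : ∀ m ≤ N, (harmonic m : ℝ) ^ r ≤ (harmonic N : ℝ) ^ r := fun m hm ↦ by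
      gcongr
      · exact_mod_cast harmonic_nonneg m
      · exact_mod_cast harmonic_mono hm
    calc harmonicESymm (r + 1) N ≤ ∑ m ∈ range N, (harmonic N : ℝ) ^ r * (1 / (m + 1)) := by
          refine sum_le_sum fun m hm ↦ ?_
          rw [mul_one_div]
          gcongr
          exact (ih m).trans (hH m (mem_range.1 hm).le)
      _ = (harmonic N : ℝ) ^ (r + 1) := by
          rw [← mul_sum, pow_succ, harmonic]
          push_cast
          simp [one_div]

theorem harmonicESymm_le_one_add_harmonic_pow (r N : ℕ) :
    harmonicESymm r N ≤ (1 + (harmonic N : ℝ)) ^ r :=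
  (harmonicESymm_le_harmonic_pow r N).trans <|
    pow_le_pow_left₀ (by exact_mod_cast harmonic_nonneg N) (by linarith) r

theorem abs_sub_harmonicESymm_div_le (r n : ℕ) :
    |harmonicESymm r (n + 1) / (n + 1 + 1) - harmonicESymm r n / (n + 1)|
      ≤ (1 + (harmonic n : ℝ)) ^ r / (n + 1) ^ 2 := by
  have hK : 1 ≤ 1 + (harmonic n : ℝ) := le_add_of_nonneg_right (by exact_mod_cast harmonic_nonneg n)
  -- `d = (n + 1) (e_r(n + 1) - e_r(n))` is `e_{r-1}(n)`, or `0` when `r = 0`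
  obtain ⟨d, hd0, hdK, hd⟩ : ∃ d, 0 ≤ d ∧ d ≤ (1 + (harmonic n : ℝ)) ^ r ∧
      harmonicESymm r (n + 1) = harmonicESymm r n + d / (n + 1) := by
    cases r with
    | zero => exact ⟨0, le_rfl, zero_le_one, by simp [harmonicESymm]⟩
    | succ r =>
      refine ⟨harmonicESymm r n, harmonicESymm_nonneg r n, ?_, harmonicESymm_succ_succ r n⟩
      exact (harmonicESymm_le_one_add_harmonic_pow r n).trans (pow_le_pow_right₀ hK r.le_succ)
  have hB0 := harmonicESymm_nonneg r n
  have hBK := harmonicESymm_le_one_add_harmonic_pow r n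
  have hn : (0 : ℝ) < n + 1 := n.cast_add_one_pos
  have hdiff : harmonicESymm r (n + 1) / (n + 1 + 1) - harmonicESymm r n / (n + 1)
      = (d - harmonicESymm r n) / ((n + 1) * (n + 1 + 1)) := by
    rw [hd]; field_simp; ring
  rw [hdiff, abs_div, abs_of_pos (by positivity : (0 : ℝ) < (n + 1) * (n + 1 + 1)), sq]
  exact div_le_div₀ (pow_nonneg (by linarith) r) (abs_sub_le_iff.2 ⟨by linarith, by linarith⟩)
    (by positivity) (mul_le_mul_of_nonneg_left (by linarith) hn.le)

theorem tendsto_harmonicESymm_div (r : ℕ) :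
    Tendsto (fun n : ℕ ↦ harmonicESymm r n / (n + 1)) atTop (𝓝 0) := by
  obtain ⟨C, hC⟩ := one_add_harmonic_pow_le r
  have hlim : Tendsto (fun n : ℕ ↦ C * ((n : ℝ) + 1) ^ (-(1 / 2) : ℝ)) atTop (𝓝 0) := by
    simpa using ((tendsto_rpow_neg_atTop (by norm_num : (0 : ℝ) < 1 / 2)).comp
      (tendsto_atTop_add_const_right _ 1 tendsto_natCast_atTop_atTop)).const_mul C
  refine squeeze_zero (fun n ↦ div_nonneg (harmonicESymm_nonneg r n) n.cast_add_one_pos.le)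
    (fun n ↦ ?_) hlim
  have hn : (0 : ℝ) < n + 1 := n.cast_add_one_pos
  calc harmonicESymm r n / (n + 1) ≤ C * ((n : ℝ) + 1) ^ (1 / 2 : ℝ) / (n + 1) := by
        grw [harmonicESymm_le_one_add_harmonic_pow, hC]
    _ = C * ((n : ℝ) + 1) ^ (-(1 / 2) : ℝ) := by
        rw [mul_div_assoc, ← Real.rpow_sub_one hn.ne']; norm_num

theorem summable_abs_sub_harmonicESymm_div (r : ℕ) :
    Summable fun n : ℕ ↦ |harmonicESymm r (n + 1) / (n + 1 + 1) - harmonicESymm r n / (n + 1)| := by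
  obtain ⟨C, hC⟩ := one_add_harmonic_pow_le r
  have hsum : Summable fun n : ℕ ↦ C * ((n : ℝ) + 1) ^ (-(3 / 2) : ℝ) := by
    refine Summable.mul_left C ?_
    exact_mod_cast (summable_nat_add_iff 1).2 (Real.summable_nat_rpow.2 (by norm_num))
  refine hsum.of_nonneg_of_le (fun n ↦ abs_nonneg _) fun n ↦ ?_
  have hn : (0 : ℝ) < n + 1 := n.cast_add_one_pos
  calc _ ≤ (1 + (harmonic n : ℝ)) ^ r / (n + 1) ^ 2 := abs_sub_harmonicESymm_div_le r n
    _ ≤ C * ((n : ℝ) + 1) ^ (1 / 2 : ℝ) / (n + 1) ^ 2 := by grw [hC]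
    _ = C * ((n : ℝ) + 1) ^ (-(3 / 2) : ℝ) := by
        rw [mul_div_assoc, ← Real.rpow_natCast, ← Real.rpow_sub hn]; norm_num

theorem Fin.strictMono_snoc_iff {α : Type*} [Preorder α] {r : ℕ} {g : Fin r → α} {k : α} :
    StrictMono (Fin.snoc g k : Fin (r + 1) → α) ↔ StrictMono g ∧ ∀ i, g i < k := by
  refine ⟨fun h ↦ ⟨fun i j hij ↦ ?_, fun i ↦ ?_⟩, fun ⟨hg, hk⟩ i j hij ↦ ?_⟩
  · simpa using h (castSucc_lt_castSucc_iff.2 hij)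
  · simpa using h (castSucc_lt_last i)
  · induction j using Fin.lastCases with
    | last =>
      obtain ⟨i, rfl⟩ := exists_castSucc_eq.2 hij.ne
      simpa using hk i
    | cast j =>
      obtain ⟨i, rfl⟩ := exists_castSucc_eq.2 (hij.trans (castSucc_lt_last j)).ne
      simpa using hg (castSucc_lt_castSucc_iff.1 hij)

def incTuples (r N : ℕ) : Finset (Fin r → ℕ) :=
  (Fintype.piFinset fun _ : Fin r => Icc 1 N).filter fun n => ∀ i j : Fin r, i < j → n i < n j

theorem mem_incTuples {r N : ℕ} {n : Fin r → ℕ} :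
    n ∈ incTuples r N ↔ (∀ i, n i ∈ Icc 1 N) ∧ StrictMono n := by
  simp only [incTuples, mem_filter, Fintype.mem_piFinset]
  rfl

theorem snoc_mem_incTuples_iff {r N k : ℕ} {g : Fin r → ℕ} :
    (Fin.snoc g k : Fin (r + 1) → ℕ) ∈ incTuples (r + 1) N ↔
      k ∈ Icc 1 N ∧ g ∈ incTuples r (k - 1) := by
  simp only [mem_incTuples, Fin.strictMono_snoc_iff, Fin.forall_fin_succ', Fin.snoc_castSucc,
    Fin.snoc_last, mem_Icc]
  refine ⟨fun ⟨⟨hg, hk⟩, hmono, hlt⟩ ↦ ⟨hk, fun i ↦ ?_, hmono⟩,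
    fun ⟨hk, hg, hmono⟩ ↦ ⟨⟨fun i ↦ ?_, hk⟩, hmono, fun i ↦ ?_⟩⟩
  · have := hg i; have := hlt i; omega
  · have := hg i; omega
  · have := hg i; omega

theorem sum_incTuples_succ {M : Type*} [AddCommMonoid M] (r N : ℕ) (F : (Fin (r + 1) → ℕ) → M) :
    ∑ n ∈ incTuples (r + 1) N, F n =
      ∑ m ∈ range N, ∑ g ∈ incTuples r m, F (Fin.snoc g (m + 1)) := by
  have hsnoc {n : Fin (r + 1) → ℕ} (hn : n ∈ incTuples (r + 1) N) :
      n (Fin.last r) ∈ Icc 1 N ∧ Fin.init n ∈ incTuples r (n (Fin.last r) - 1) := by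
    rwa [← snoc_mem_incTuples_iff, Fin.snoc_init_self]
  have hinv {n : Fin (r + 1) → ℕ} (hn : n ∈ incTuples (r + 1) N) :
      (Fin.snoc (Fin.init n) (n (Fin.last r) - 1 + 1) : Fin (r + 1) → ℕ) = n := by
    rw [Nat.sub_add_cancel (mem_Icc.1 (hsnoc hn).1).1, Fin.snoc_init_self]
  rw [sum_sigma']
  refine sum_nbij' (fun n ↦ ⟨n (Fin.last r) - 1, Fin.init n⟩) (fun p ↦ Fin.snoc p.2 (p.1 + 1))
    (fun n hn ↦ ?_) (fun p hp ↦ ?_) (fun n hn ↦ hinv hn) (fun p _ ↦ by simp)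
    (fun n hn ↦ by rw [hinv hn])
  · obtain ⟨hlast, hinit⟩ := hsnoc hn
    rw [mem_Icc] at hlast
    exact mem_sigma.2 ⟨mem_range.2 (show n (Fin.last r) - 1 < N by omega), hinit⟩
  · rw [mem_sigma, mem_range] at hp
    exact snoc_mem_incTuples_iff.2 ⟨mem_Icc.2 ⟨by omega, hp.1⟩, hp.2⟩

theorem unitZetaPartial_zero (ε : ℂ) (M : ℕ) : unitZetaPartial ε 0 M = 1 := by
  simp [unitZetaPartial]

theorem unitZetaPartial_succ (ε : ℂ) (r M : ℕ) :
    unitZetaPartial ε (r + 1) M =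
      ∑ m ∈ range M, ε ^ (m + 1) / (m + 1) * unitZetaPartial 1 r m := by
  rw [unitZetaPartial, ← incTuples, sum_incTuples_succ]
  refine sum_congr rfl fun m _ ↦ ?_
  rw [unitZetaPartial, ← incTuples, mul_sum]
  refine sum_congr rfl fun g _ ↦ ?_
  have hval (i : Fin r) : (i : ℕ) ≠ r := i.isLt.ne
  simp [Fin.prod_univ_castSucc, hval, div_eq_mul_inv, mul_comm]

theorem unitZetaPartial_one (r N : ℕ) : unitZetaPartial 1 r N = harmonicESymm r N := by
  induction r generalizing N with
  | zero => simp [unitZetaPartial_zero, harmonicESymm]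
  | succ r ih =>
    simp only [unitZetaPartial_succ, ih, harmonicESymm]
    push_cast
    exact sum_congr rfl fun m _ ↦ by ring

/-- The series `∑ Xⁿ / n` of `-log (1 - X)`; its constant coefficient is `(0 : ℝ)⁻¹ = 0`. -/
noncomputable def negLogOneSub : ℝ⟦X⟧ := PowerSeries.mk fun n ↦ (n : ℝ)⁻¹

noncomputable def negLogOneSubPowDiv (r : ℕ) : ℝ⟦X⟧ := (r.factorial : ℝ)⁻¹ • negLogOneSub ^ r

theorem coeff_negLogOneSub (n : ℕ) : coeff n negLogOneSub = (n : ℝ)⁻¹ := coeff_mk _ _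

theorem derivative_negLogOneSub : d⁄dX ℝ negLogOneSub = PowerSeries.mk 1 := by
  ext n
  rw [coeff_derivative, coeff_negLogOneSub, coeff_mk]
  push_cast
  exact inv_mul_cancel₀ n.cast_add_one_ne_zero

theorem derivative_negLogOneSubPowDiv_succ (r : ℕ) :
    d⁄dX ℝ (negLogOneSubPowDiv (r + 1)) = negLogOneSubPowDiv r * PowerSeries.mk 1 := by
  rw [negLogOneSubPowDiv, Derivation.map_smul, derivative_pow, derivative_negLogOneSub,
    negLogOneSubPowDiv, Nat.add_sub_cancel, ← nsmul_eq_mul, smul_mul_assoc, smul_mul_assoc,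
    ← Nat.cast_smul_eq_nsmul ℝ, smul_smul, Nat.factorial_succ]
  congr 1
  push_cast
  field_simp

theorem constantCoeff_negLogOneSubPowDiv_succ (r : ℕ) :
    constantCoeff (negLogOneSubPowDiv (r + 1)) = 0 := by
  have : constantCoeff negLogOneSub = 0 := by
    rw [← coeff_zero_eq_constantCoeff_apply, coeff_negLogOneSub, Nat.cast_zero, inv_zero]
  simp [negLogOneSubPowDiv, this]

theorem coeff_succ_negLogOneSubPowDiv_succ_mul (r n : ℕ) :
    coeff (n + 1) (negLogOneSubPowDiv (r + 1)) * (n + 1) =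
      ∑ m ∈ range (n + 1), coeff m (negLogOneSubPowDiv r) := by
  rw [← coeff_derivative, derivative_negLogOneSubPowDiv_succ, coeff_mul,
    Nat.sum_antidiagonal_eq_sum_range_succ_mk]
  simp

theorem sum_range_coeff_negLogOneSubPowDiv (r n : ℕ) :
    ∑ m ∈ range (n + 1), coeff m (negLogOneSubPowDiv r) = harmonicESymm r n := by
  induction r generalizing n with
  | zero => simp [negLogOneSubPowDiv, coeff_one, harmonicESymm]
  | succ r ih =>
    rw [sum_range_succ', coeff_zero_eq_constantCoeff_apply, constantCoeff_negLogOneSubPowDiv_succ,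
      add_zero, harmonicESymm]
    refine sum_congr rfl fun m _ ↦ ?_
    rw [← ih, ← coeff_succ_negLogOneSubPowDiv_succ_mul,
      mul_div_cancel_right₀ _ m.cast_add_one_ne_zero]

theorem coeff_succ_negLogOneSubPowDiv_succ (r n : ℕ) :
    coeff (n + 1) (negLogOneSubPowDiv (r + 1)) = harmonicESymm r n / (n + 1) := by
  rw [eq_div_iff n.cast_add_one_ne_zero, coeff_succ_negLogOneSubPowDiv_succ_mul,
    sum_range_coeff_negLogOneSubPowDiv]

theorem PowerSeries.algebraMap_coeff_mul_mul_pow {R A : Type*} [CommSemiring R] [CommSemiring A]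
    [Algebra R A] (f g : R⟦X⟧) (z : A) (n : ℕ) :
    algebraMap R A (coeff n (f * g)) * z ^ n = ∑ p ∈ antidiagonal n,
      algebraMap R A (coeff p.1 f) * z ^ p.1 * (algebraMap R A (coeff p.2 g) * z ^ p.2) := by
  rw [coeff_mul, map_sum, sum_mul]
  refine sum_congr rfl fun p hp ↦ ?_
  rw [← mem_antidiagonal.1 hp, map_mul, pow_add]
  ring

theorem summable_norm_and_hasSum_coeff_negLogOneSub_pow {z : ℂ} (hz : ‖z‖ < 1) (r : ℕ) :
    (Summable fun n ↦ ‖((coeff n (negLogOneSub ^ r) : ℝ) : ℂ) * z ^ n‖) ∧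
      HasSum (fun n ↦ ((coeff n (negLogOneSub ^ r) : ℝ) : ℂ) * z ^ n)
        ((-Complex.log (1 - z)) ^ r) := by
  induction r with
  | zero =>
    have hterm : (fun n ↦ ((coeff n (negLogOneSub ^ 0) : ℝ) : ℂ) * z ^ n) =
        fun n ↦ if n = 0 then 1 else 0 := by
      ext n; rw [pow_zero, coeff_one]; split_ifs with h <;> simp [h]
    rw [hterm, pow_zero]
    exact ⟨summable_of_ne_finset_zero (s := {0}) fun n hn ↦ by simp_all, hasSum_ite_eq 0 1⟩
  | succ r ih =>
    set f : ℕ → ℂ := fun n ↦ ((coeff n (negLogOneSub ^ r) : ℝ) : ℂ) * z ^ n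
    set g : ℕ → ℂ := fun n ↦ ((coeff n negLogOneSub : ℝ) : ℂ) * z ^ n
    have hg : HasSum g (-Complex.log (1 - z)) := by
      simpa [g, coeff_negLogOneSub, div_eq_inv_mul] using Complex.hasSum_taylorSeries_neg_log hz
    have hg' : Summable fun n ↦ ‖g n‖ := by
      refine (summable_geometric_of_lt_one (norm_nonneg z) hz).of_nonneg_of_le
        (fun n ↦ norm_nonneg _) fun n ↦ ?_
      rw [norm_mul, norm_pow, coeff_negLogOneSub, Complex.norm_real, norm_inv, Real.norm_natCast]
      exact mul_le_of_le_one_left (by positivity) (Nat.cast_inv_le_one n)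
    have hterm (n : ℕ) : ((coeff n (negLogOneSub ^ (r + 1)) : ℝ) : ℂ) * z ^ n =
        ∑ p ∈ antidiagonal n, f p.1 * g p.2 := by
      rw [pow_succ]
      simpa using algebraMap_coeff_mul_mul_pow (A := ℂ) (negLogOneSub ^ r) negLogOneSub z n
    obtain ⟨hf', hf⟩ := ih
    have hsum := summable_norm_sum_mul_antidiagonal_of_summable_norm hf' hg'
    have hprod : HasSum (fun n ↦ ∑ p ∈ antidiagonal n, f p.1 * g p.2)
        ((-Complex.log (1 - z)) ^ (r + 1)) := by
      rw [pow_succ, ← hf.tsum_eq, ← hg.tsum_eq,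
        tsum_mul_tsum_eq_tsum_sum_antidiagonal_of_summable_norm hf' hg']
      exact hsum.of_norm.hasSum
    simp only [hterm]
    exact ⟨hsum, hprod⟩

theorem hasSum_coeff_negLogOneSubPowDiv {z : ℂ} (hz : ‖z‖ < 1) (r : ℕ) :
    HasSum (fun n ↦ ((coeff n (negLogOneSubPowDiv r) : ℝ) : ℂ) * z ^ n)
      ((-Complex.log (1 - z)) ^ r / r.factorial) := by
  simpa [negLogOneSubPowDiv, div_eq_inv_mul, mul_assoc] using
    (summable_norm_and_hasSum_coeff_negLogOneSub_pow hz r).2.mul_left (r.factorial : ℂ)⁻¹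

theorem eq_of_tendsto_sum_coeff_negLogOneSubPowDiv {ε l : ℂ} (hε : ‖ε‖ ≤ 1) (hε1 : ε ≠ 1)
    {r : ℕ} (h : Tendsto (fun N ↦ ∑ i ∈ range N, ((coeff i (negLogOneSubPowDiv r) : ℝ) : ℂ) * ε ^ i)
      atTop (𝓝 l)) :
    l = (-Complex.log (1 - ε)) ^ r / r.factorial := by
  refine eq_of_tendsto_sum_of_hasSum_of_continuousAt
    (G := fun z ↦ (-Complex.log (1 - z)) ^ r / r.factorial) hε
    (fun z hz ↦ hasSum_coeff_negLogOneSubPowDiv hz r) ?_ h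
  have := (continuousAt_clog (Complex.one_sub_mem_slitPlane hε hε1)).comp
    (continuous_const.sub continuous_id).continuousAt
  exact (this.neg.pow r).div_const _

theorem unitZetaPartial_eq_sum_coeff (ε : ℂ) (r M : ℕ) :
    unitZetaPartial ε (r + 1) M =
      ∑ i ∈ range (M + 1), ((coeff i (negLogOneSubPowDiv (r + 1)) : ℝ) : ℂ) * ε ^ i := by
  rw [sum_range_succ', coeff_zero_eq_constantCoeff_apply, constantCoeff_negLogOneSubPowDiv_succ,
    unitZetaPartial_succ]
  simp only [coeff_succ_negLogOneSubPowDiv_succ, unitZetaPartial_one]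
  push_cast
  simp only [zero_mul, add_zero]
  exact sum_congr rfl fun m _ ↦ by ring

theorem tendsto_coeff_negLogOneSubPowDiv_succ (r : ℕ) :
    Tendsto (fun n ↦ coeff n (negLogOneSubPowDiv (r + 1))) atTop (𝓝 0) :=
  (tendsto_add_atTop_iff_nat 1).1 <| by
    simpa only [coeff_succ_negLogOneSubPowDiv_succ] using tendsto_harmonicESymm_div r

theorem summable_abs_sub_coeff_negLogOneSubPowDiv_succ (r : ℕ) :
    Summable fun n ↦
      |coeff (n + 1) (negLogOneSubPowDiv (r + 1)) - coeff n (negLogOneSubPowDiv (r + 1))| :=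
  (summable_nat_add_iff 1).1 <| by
    simpa [coeff_succ_negLogOneSubPowDiv_succ] using summable_abs_sub_harmonicESymm_div r

theorem unitZeta_eq_pow_log_general (ε : ℂ) (habs : ‖ε‖ = 1) (hne : ε ≠ 1)
    (r : ℕ) :
    Tendsto (unitZetaPartial ε r) atTop
      (𝓝 ((-1) ^ r / (r.factorial : ℂ) * Complex.log (1 - ε) ^ r)) := by
  rcases r with _ | r
  · simp [funext (unitZetaPartial_zero ε)]
  obtain ⟨l, hl⟩ := cauchySeq_tendsto_of_complete <|
    cauchySeq_series_smul_of_tendsto_zero_of_summable_abs_sub (z := fun i ↦ ε ^ i)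
      (tendsto_coeff_negLogOneSubPowDiv_succ r) (summable_abs_sub_coeff_negLogOneSubPowDiv_succ r)
      (norm_geom_sum_le habs.le hne)
  simp_rw [Complex.real_smul] at hl
  have hl_eq := eq_of_tendsto_sum_coeff_negLogOneSubPowDiv habs.le hne hl
  rw [show (-1) ^ (r + 1) / ((r + 1).factorial : ℂ) * Complex.log (1 - ε) ^ (r + 1) = l by
    rw [hl_eq, neg_pow]; ring]
  exact (hl.comp (tendsto_add_atTop_nat 1)).congr fun M ↦ (unitZetaPartial_eq_sum_coeff ε r M).symm

/-- For `ε` on the unit circle with `ε ≠ 1` and `r ≥ 1`, the unit cyclotomic multiple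
zeta value `ζ(1,…,1; 1,…,1,ε)` of weight and depth `r` equals
`((-1)^r / r!) · (log(1-ε))^r`, where `log` is the principal branch of the logarithm. -/
theorem unitZeta_eq_pow_log (ε : ℂ) (habs : ‖ε‖ = 1) (hne : ε ≠ 1)
    (r : ℕ) (hr : 1 ≤ r) :
    Tendsto (unitZetaPartial ε r) atTop
      (𝓝 ((-1) ^ r / (r.factorial : ℂ) * Complex.log (1 - ε) ^ r)) :=
  unitZeta_eq_pow_log_general ε habs hne r
end

section
/- (Vanishing part of Lemma 3.2.) Let m ≥ 1, ε ∈ μ_N, and set σ = (ad e_0)^m (e_ε) ∈ A, where ad e_0 (x) = e_0·x − x·e_0. Then for all i₁,…,i_s ∈ μ_N (s ≥ 0), when σ ∘ (e_{i₁} e_{i₂} ⋯ e_{i_s}) is written in the basis of words in the generators e_0, (e_α)_{α∈μ_N}, the coefficient of every word that contains no occurrence of e_0 is zero. -/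
/-- An `N`-th root of unity in `ℂ`. -/
def RootOfUnity (N : ℕ) : Type := {z : ℂ // z ^ N = 1}

/-- The product of two `N`-th roots of unity. -/
def RootOfUnity.mul {N : ℕ} (ε α : RootOfUnity N) : RootOfUnity N :=
  ⟨ε.1 * α.1, by rw [mul_pow, ε.2, α.2, mul_one]⟩

/-- The generator alphabet: `none` stands for `e₀` and `some α` for `e_α`, `α ∈ μ_N`. -/
def Alphabet (N : ℕ) : Type := Option (RootOfUnity N)

/-- The free noncommutative `ℚ`-algebra `A` on the generators `e₀, (e_α)_{α ∈ μ_N}`. -/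
def FreeAlg (N : ℕ) : Type := MonoidAlgebra ℚ (FreeMonoid (Alphabet N))

noncomputable instance (N : ℕ) : Ring (FreeAlg N) :=
  inferInstanceAs (Ring (MonoidAlgebra ℚ (FreeMonoid (Alphabet N))))

noncomputable instance (N : ℕ) : Algebra ℚ (FreeAlg N) :=
  inferInstanceAs (Algebra ℚ (MonoidAlgebra ℚ (FreeMonoid (Alphabet N))))

/-- The word `u₁u₂⋯u_n` as an element of `A`. -/
noncomputable def word {N : ℕ} (l : List (Alphabet N)) : FreeAlg N :=
  MonoidAlgebra.of ℚ (FreeMonoid (Alphabet N)) (FreeMonoid.ofList l)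

/-- A single generator as an element of `A`. -/
noncomputable def gen {N : ℕ} (g : Alphabet N) : FreeAlg N := word [g]

/-- `A` viewed as the monoid algebra on the free monoid of words. -/
def FreeAlg.toMA {N : ℕ} (x : FreeAlg N) : MonoidAlgebra ℚ (FreeMonoid (Alphabet N)) := x

/-- The coefficient of the word `m` in `x ∈ A` (words form a `ℚ`-basis of `A`). -/
noncomputable def coeffOf {N : ℕ} (x : FreeAlg N) (m : FreeMonoid (Alphabet N)) : ℚ :=
  x.toMA.coeff m

/-!
Let `π = killE0` be the algebra endomorphism of `A` sending `e₀ ↦ 0` and fixing every `e_α`.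
It kills the words containing `e₀` and fixes the others, so it preserves the coefficients of
`e₀`-free words, and it suffices to show `π (σ ∘ e_{i₁}⋯e_{i_s}) = 0`. Being multiplicative,
`π` kills every commutator with `e₀`, hence `σ`; and since `[ε']` fixes `e₀`, also
`[ε']σ = (ad e₀)^m ([ε'] e_ε)`. As `π` commutes with `∗`, every term of the recursion for
`σ ∘ w` then vanishes under `π`, by induction on the word.
-/

open FreeMonoid

section Commutator

variable {R S F : Type*} [Ring R] [Ring S] [FunLike F R S] [RingHomClass F R S]

theorem map_iterate_commutator (f : F) (a : R) (m : ℕ) (x : R) :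
    f ((fun y => a * y - y * a)^[m] x) = (fun y => f a * y - y * f a)^[m] (f x) :=
  Function.Semiconj.iterate_right (fun y => by simp only [map_sub, map_mul]) m x

theorem iterate_commutator_zero {m : ℕ} (hm : 1 ≤ m) (x : S) :
    (fun y => (0 : S) * y - y * 0)^[m] x = 0 := by
  obtain ⟨k, rfl⟩ := Nat.exists_eq_add_of_le' hm
  rw [Function.iterate_succ_apply', zero_mul, mul_zero, sub_zero]

end Commutator

variable {N : ℕ}

theorem word_nil : word ([] : List (Alphabet N)) = 1 := rfl

theorem word_cons (g : Alphabet N) (l : List (Alphabet N)) :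
    word (g :: l) = gen g * word l :=
  map_mul (MonoidAlgebra.of ℚ (FreeMonoid (Alphabet N))) (ofList [g]) (ofList l)

theorem single_eq_smul_word (w : FreeMonoid (Alphabet N)) (c : ℚ) :
    (MonoidAlgebra.single w c : FreeAlg N) = c • word w.toList := by
  show _ = c • (MonoidAlgebra.single (ofList w.toList) 1 : MonoidAlgebra ℚ _)
  rw [ofList_toList, MonoidAlgebra.smul_single', mul_one]

noncomputable def killE0 : FreeAlg N →ₐ[ℚ] FreeAlg N :=
  MonoidAlgebra.lift ℚ (FreeAlg N) (FreeMonoid (Alphabet N))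
    (FreeMonoid.lift fun g => Option.elim g 0 fun α => gen (some α))

theorem killE0_gen (g : Alphabet N) :
    killE0 (gen g) = Option.elim g 0 fun α => gen (some α) :=
  (MonoidAlgebra.lift_of _ (ofList [g])).trans (by rw [ofList_singleton, lift_eval_of])

theorem killE0_gen_none : killE0 (gen none : FreeAlg N) = 0 := killE0_gen none

theorem killE0_word_of_none_mem {l : List (Alphabet N)} (hl : none ∈ l) :
    killE0 (word l) = 0 := by
  induction l with
  | nil => cases hl
  | cons g l ih =>
    rw [word_cons, map_mul]
    rcases List.mem_cons.mp hl with rfl | hl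
    · rw [killE0_gen_none, zero_mul]
    · rw [ih hl, mul_zero]

theorem killE0_word_of_none_not_mem {l : List (Alphabet N)} (hl : none ∉ l) :
    killE0 (word l) = word l := by
  induction l with
  | nil => rw [word_nil, map_one]
  | cons g l ih =>
    rw [word_cons, map_mul, ih (List.not_mem_of_not_mem_cons hl), killE0_gen]
    cases g with
    | none => exact absurd List.mem_cons_self hl
    | some α => rfl

theorem FreeAlg.induction_linear {motive : FreeAlg N → Prop} (x : FreeAlg N)
    (zero : motive 0) (add : ∀ x y, motive x → motive y → motive (x + y))
    (smul_word : ∀ (c : ℚ) (l : List (Alphabet N)), motive (c • word l)) : motive x :=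
  MonoidAlgebra.induction_linear x zero add fun w c =>
    single_eq_smul_word w c ▸ smul_word c w.toList

theorem coeffOf_smul_word_of_ne (c : ℚ) {l' l : List (Alphabet N)} (h : l' ≠ l) :
    coeffOf (c • word l') (ofList l) = 0 := by
  show c • Finsupp.single (ofList l') (1 : ℚ) (ofList l) = 0
  rw [Finsupp.single_eq_of_ne (fun h' => h (ofList.injective h').symm), smul_zero]

theorem coeffOf_killE0 (x : FreeAlg N) {l : List (Alphabet N)} (hl : none ∉ l) :
    coeffOf (killE0 x) (ofList l) = coeffOf x (ofList l) := by
  induction x using FreeAlg.induction_linear with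
  | zero => rw [map_zero]
  | add x y hx hy =>
    rw [map_add]
    exact congrArg₂ (· + ·) hx hy
  | smul_word c l' =>
    rw [map_smul]
    by_cases hl' : none ∈ l'
    · rw [killE0_word_of_none_mem hl', smul_zero,
        coeffOf_smul_word_of_ne c fun h : l' = l => hl (h ▸ hl')]
      rfl
    · rw [killE0_word_of_none_not_mem hl']

theorem killE0_star (star : FreeAlg N →ₗ[ℚ] FreeAlg N)
    (hstar : ∀ l : List (Alphabet N), star (word l) = ((-1 : ℚ) ^ l.length) • word l.reverse)
    (x : FreeAlg N) : killE0 (star x) = star (killE0 x) := by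
  induction x using FreeAlg.induction_linear with
  | zero => rw [map_zero, map_zero, map_zero]
  | add x y hx hy => rw [map_add, map_add, map_add, map_add, hx, hy]
  | smul_word c l =>
    rw [map_smul, map_smul, hstar, map_smul, map_smul, map_smul]
    by_cases hl : none ∈ l
    · rw [killE0_word_of_none_mem hl,
        killE0_word_of_none_mem (l := l.reverse) (List.mem_reverse.mpr hl), map_zero, smul_zero,
        smul_zero]
    · rw [killE0_word_of_none_not_mem hl,
        killE0_word_of_none_not_mem (l := l.reverse) (mt List.mem_reverse.mp hl), hstar]

theorem killE0_iterate_ad {m : ℕ} (hm : 1 ≤ m) (x : FreeAlg N) :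
    killE0 ((fun y => gen none * y - y * gen none)^[m] x) = 0 := by
  rw [map_iterate_commutator, killE0_gen_none, iterate_commutator_zero hm]

theorem killE0_circ_word (circ : FreeAlg N →ₗ[ℚ] FreeAlg N →ₗ[ℚ] FreeAlg N)
    (bracket : RootOfUnity N → FreeAlg N →ₐ[ℚ] FreeAlg N) (star : FreeAlg N →ₗ[ℚ] FreeAlg N)
    (hstar : ∀ l : List (Alphabet N), star (word l) = ((-1 : ℚ) ^ l.length) • word l.reverse)
    (hcirc0 : ∀ a : FreeAlg N, circ a 1 = a)
    (hcirc : ∀ (a : FreeAlg N) (ε : RootOfUnity N) (w : List (Alphabet N)),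
      circ a (gen (some ε) * word w) =
        (bracket ε a * gen (some ε) + gen (some ε) * star (bracket ε a)) * word w +
          gen (some ε) * circ a (word w))
    {a : FreeAlg N} (ha : killE0 a = 0) (hbracket : ∀ ε, killE0 (bracket ε a) = 0)
    (i : List (RootOfUnity N)) : killE0 (circ a (word (i.map some))) = 0 := by
  induction i with
  | nil => rw [show word (List.map some []) = 1 from word_nil, hcirc0, ha]
  | cons ε i ih =>
    rw [show word (List.map some (ε :: i)) = gen (some ε) * word (i.map some) from word_cons _ _,
      hcirc]
    simp only [map_add, map_mul, killE0_star star hstar, hbracket, ih, map_zero, zero_mul,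
      mul_zero, add_zero]

theorem ihara_action_ad_vanishing_general (N : ℕ)
    (circ : FreeAlg N →ₗ[ℚ] FreeAlg N →ₗ[ℚ] FreeAlg N)
    (bracket : RootOfUnity N → FreeAlg N →ₐ[ℚ] FreeAlg N)
    (hbr0 : ∀ ε : RootOfUnity N, bracket ε (gen none) = gen none)
    (star : FreeAlg N →ₗ[ℚ] FreeAlg N)
    (hstar : ∀ l : List (Alphabet N),
      star (word l) = ((-1 : ℚ) ^ l.length) • word l.reverse)
    (hcirc0 : ∀ (a : FreeAlg N) (n : ℕ),
      circ a (gen none ^ n) = gen none ^ n * a)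
    (hcirc : ∀ (a : FreeAlg N) (n : ℕ) (ε : RootOfUnity N) (w : List (Alphabet N)),
      circ a (gen none ^ n * gen (some ε) * word w) =
        gen none ^ n *
            (bracket ε a * gen (some ε) + gen (some ε) * star (bracket ε a)) * word w +
          gen none ^ n * gen (some ε) * circ a (word w))
    (m : ℕ) (hm : 1 ≤ m) (ε : RootOfUnity N)
    (σ : FreeAlg N)
    (hσ : σ = (fun y => gen none * y - y * gen none)^[m] (gen (some ε)))
    (i : List (RootOfUnity N)) (l : List (Alphabet N)) (hl : none ∉ l) :
    coeffOf (circ σ (word (i.map some))) (FreeMonoid.ofList l) = 0 := by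
  have hσ_killed : killE0 σ = 0 := hσ ▸ killE0_iterate_ad hm _
  have hbracket_killed (ε' : RootOfUnity N) : killE0 (bracket ε' σ) = 0 := by
    rw [hσ, map_iterate_commutator, hbr0, killE0_iterate_ad hm]
  have h := killE0_circ_word circ bracket star hstar
    (fun a => by simpa using hcirc0 a 0) (fun a ε w => by simpa using hcirc a 0 ε w)
    hσ_killed hbracket_killed i
  rw [← coeffOf_killE0 _ hl, h]
  rfl

/-- Vanishing part of Lemma 3.2: with `σ = (ad e₀)^m (e_ε)`, `m ≥ 1`, every word containing
no occurrence of `e₀` has zero coefficient in `σ ∘ (e_{i₁}⋯e_{i_s})`, where `∘` is any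
`ℚ`-bilinear map satisfying the defining recursion of the Ihara action. -/
theorem ihara_action_ad_vanishing (N : ℕ) (hN : 1 ≤ N)
    (circ : FreeAlg N →ₗ[ℚ] FreeAlg N →ₗ[ℚ] FreeAlg N)
    (bracket : RootOfUnity N → FreeAlg N →ₐ[ℚ] FreeAlg N)
    (hbr0 : ∀ ε : RootOfUnity N, bracket ε (gen none) = gen none)
    (hbr : ∀ ε α : RootOfUnity N, bracket ε (gen (some α)) = gen (some (ε.mul α)))
    (star : FreeAlg N →ₗ[ℚ] FreeAlg N)
    (hstar : ∀ l : List (Alphabet N),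
      star (word l) = ((-1 : ℚ) ^ l.length) • word l.reverse)
    (hcirc0 : ∀ (a : FreeAlg N) (n : ℕ),
      circ a (gen none ^ n) = gen none ^ n * a)
    (hcirc : ∀ (a : FreeAlg N) (n : ℕ) (ε : RootOfUnity N) (w : List (Alphabet N)),
      circ a (gen none ^ n * gen (some ε) * word w) =
        gen none ^ n *
            (bracket ε a * gen (some ε) + gen (some ε) * star (bracket ε a)) * word w +
          gen none ^ n * gen (some ε) * circ a (word w))
    (m : ℕ) (hm : 1 ≤ m) (ε : RootOfUnity N)
    (σ : FreeAlg N)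
    (hσ : σ = (fun y => gen none * y - y * gen none)^[m] (gen (some ε)))
    (i : List (RootOfUnity N)) (l : List (Alphabet N)) (hl : none ∉ l) :
    coeffOf (circ σ (word (i.map some))) (FreeMonoid.ofList l) = 0 :=
  ihara_action_ad_vanishing_general N circ bracket hbr0 star hstar hcirc0 hcirc m hm ε σ hσ i l hl
end
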